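/- (Distributed formation control with the modified event function, Theorem 5.) Let G be a graph on n vertices with m edges with desired distances d_k > 0, let p : [0,∞) → (Fin n → ℝ^d) be differentiable, let e(t) ∈ ℝ^m denote the distance error vector of p(t), and for each agent i set w_i(t) := (R(p(t))ᵀ e(t))_i ∈ ℝ^d. Suppose there exist constants a_i, γ_i ∈ (0,1), v_i > 0, θ_i > 0, λ > 0, and functions δ_i : [0,∞) → ℝ^d such that for all t ≥ 0 and all i: (i) ṗ_i(t) = −w_i(t) − δ_i(t); (ii) ‖δ_i(t)‖² ≤ γ_i a_i (2−a_i) ‖w_i(t)‖² + 2 a_i v_i exp(−θ_i t); (iii) ∑_{i=1}^n ‖w_i(t)‖² ≥ λ‖e(t)‖²; and (iv) θ_i ≠ 4ζλ for all i, where ζ = min_i (1−γ_i)(2−a_i)/2. Then, with κ = 2ζλ, for all t ≥ 0: (1/4)‖e(t)‖² ≤ exp(−2κ t)·(1/4)‖e(0)‖² + ∑_{i=1}^n (v_i/(2κ − θ_i))·(exp(−θ_i t) − exp(−2κ t)), and consequently ‖e(t)‖ → 0 as t → ∞; i.e. the agents reach the desired formation shape. -/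

import Mathlib

/-!
For `V = ‖e‖² / 4`, the duality `⟪R(p)ᵀ e, ṗ⟫ = ⟪e, R(p) ṗ⟫` gives `V' = ∑ᵢ ⟪wᵢ, -wᵢ - δᵢ⟫`.
Young's inequality `2a‖w‖‖δ‖ ≤ a²‖w‖² + ‖δ‖²` and the trigger bound give
`⟪wᵢ, -wᵢ - δᵢ⟫ ≤ -ζ‖wᵢ‖² + vᵢ exp(-θᵢ t)`, and the excitation bound `∑ᵢ ‖wᵢ‖² ≥ λ‖e‖²` turns
this into `V' ≤ -2κ V + ∑ᵢ vᵢ exp(-θᵢ t)`. Since `2κ ≠ θᵢ`, the comparison function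
`exp(2κ t) V(t) - ∑ᵢ vᵢ / (2κ - θᵢ) · exp((2κ - θᵢ) t)` has nonpositive derivative, which is
the bound; its right-hand side tends to `0` because `κ, θᵢ > 0`.
-/

open Real Filter Topology Finset
open scoped RealInnerProductSpace

section Rigidity

variable {V ι E : Type*} [Fintype ι] [NormedAddCommGroup E] [InnerProductSpace ℝ E]

/-- The `i`-th block `(R(q)ᵀ e)ᵢ` of `R(q)ᵀ e`, for the rigidity matrix `R(q)` of the graph whose
edge `k` joins `src k` and `tgt k`. -/
def rigidityTransposeMul [DecidableEq V] (src tgt : ι → V) (q : V → E) (e : ι → ℝ) (i : V) : E :=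
  ∑ k, ((if i = src k then e k • (q (src k) - q (tgt k)) else 0) +
    (if i = tgt k then e k • (q (tgt k) - q (src k)) else 0))

def distanceError (src tgt : ι → V) (dist : ι → ℝ) (q : V → E) : EuclideanSpace ℝ ι :=
  WithLp.toLp 2 fun k => ‖q (src k) - q (tgt k)‖ ^ 2 - dist k ^ 2

theorem sum_inner_rigidityTransposeMul [Fintype V] [DecidableEq V] (src tgt : ι → V)
    (q u : V → E) (e : ι → ℝ) :
    ∑ i, ⟪rigidityTransposeMul src tgt q e i, u i⟫ =
      ∑ k, e k * ⟪q (src k) - q (tgt k), u (src k) - u (tgt k)⟫ := by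
  have inner_ite : ∀ (c : Prop) [Decidable c] (x y : E),
      ⟪if c then x else 0, y⟫ = if c then ⟪x, y⟫ else 0 := by
    intro c _ x y; split_ifs <;> simp
  simp only [rigidityTransposeMul, sum_inner, inner_add_left, inner_ite]
  rw [Finset.sum_comm]
  refine Finset.sum_congr rfl fun k _ => ?_
  rw [Finset.sum_add_distrib, Finset.sum_ite_eq', Finset.sum_ite_eq', if_pos (mem_univ _),
    if_pos (mem_univ _), real_inner_smul_left, real_inner_smul_left, ← neg_sub (q (src k)),
    inner_neg_left, inner_sub_right]
  ring

theorem hasDerivAt_distanceError_energy [Fintype V] [DecidableEq V] (src tgt : ι → V)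
    (dist : ι → ℝ) {q : ℝ → V → E} {u : V → E} {t : ℝ}
    (hq : ∀ i, HasDerivAt (fun s => q s i) (u i) t) :
    HasDerivAt (fun s => 1 / 4 * ‖distanceError src tgt dist (q s)‖ ^ 2)
      (∑ i, ⟪rigidityTransposeMul src tgt (q t) (distanceError src tgt dist (q t)) i, u i⟫) t := by
  rw [sum_inner_rigidityTransposeMul]
  simp only [EuclideanSpace.real_norm_sq_eq, Finset.mul_sum]
  refine HasDerivAt.fun_sum fun k _ => ?_
  have hedge : HasDerivAt (fun s => ‖q s (src k) - q s (tgt k)‖ ^ 2 - dist k ^ 2)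
      (2 * ⟪q t (src k) - q t (tgt k), u (src k) - u (tgt k)⟫) t :=
    ((hq (src k)).sub (hq (tgt k))).norm_sq.sub_const _
  refine ((hedge.pow 2).const_mul (1 / 4)).congr_deriv ?_
  simp only [distanceError]
  ring

end Rigidity

theorem inner_neg_sub_le_of_norm_sq_le {E : Type*} [NormedAddCommGroup E]
    [InnerProductSpace ℝ E] {w δ : E} {a γ x : ℝ} (ha : 0 < a)
    (hδ : ‖δ‖ ^ 2 ≤ γ * a * (2 - a) * ‖w‖ ^ 2 + 2 * a * x) :
    ⟪w, -w - δ⟫ ≤ -((1 - γ) * (2 - a) / 2) * ‖w‖ ^ 2 + x := by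
  have hsplit : ⟪w, -w - δ⟫ = -‖w‖ ^ 2 - ⟪w, δ⟫ := by
    rw [inner_sub_right, inner_neg_right, real_inner_self_eq_norm_sq]
  have hcs : -⟪w, δ⟫ ≤ ‖w‖ * ‖δ‖ := by
    linarith [neg_abs_le ⟪w, δ⟫, abs_real_inner_le_norm w δ]
  have hyoung : 2 * a * (‖w‖ * ‖δ‖) ≤ a ^ 2 * ‖w‖ ^ 2 + ‖δ‖ ^ 2 := by
    nlinarith [sq_nonneg (a * ‖w‖ - ‖δ‖)]
  have hprod : ‖w‖ * ‖δ‖ ≤ (a / 2 + γ * (2 - a) / 2) * ‖w‖ ^ 2 + x := by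
    refine le_of_mul_le_mul_left ?_ (by positivity : 0 < 2 * a)
    linarith
  linarith

theorem sum_inner_neg_sub_le {V E : Type*} [Fintype V] [NormedAddCommGroup E]
    [InnerProductSpace ℝ E] {w δ : V → E} {a γ x : V → ℝ} {ζ lam N : ℝ}
    (ha : ∀ i, 0 < a i) (hζ : 0 ≤ ζ) (hζle : ∀ i, ζ ≤ (1 - γ i) * (2 - a i) / 2)
    (hδ : ∀ i, ‖δ i‖ ^ 2 ≤ γ i * a i * (2 - a i) * ‖w i‖ ^ 2 + 2 * a i * x i)
    (hlam : lam * N ≤ ∑ i, ‖w i‖ ^ 2) :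
    ∑ i, ⟪w i, -w i - δ i⟫ ≤ -(ζ * lam) * N + ∑ i, x i := by
  calc ∑ i, ⟪w i, -w i - δ i⟫
      ≤ ∑ i, (-ζ * ‖w i‖ ^ 2 + x i) := by
        refine Finset.sum_le_sum fun i _ => ?_
        have := inner_neg_sub_le_of_norm_sq_le (ha i) (hδ i)
        nlinarith [hζle i, sq_nonneg ‖w i‖]
    _ = -ζ * ∑ i, ‖w i‖ ^ 2 + ∑ i, x i := by rw [Finset.sum_add_distrib, Finset.mul_sum]
    _ ≤ -(ζ * lam) * N + ∑ i, x i := by nlinarith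

theorem hasDerivAt_exp_const_mul (r s : ℝ) :
    HasDerivAt (fun s => exp (r * s)) (r * exp (r * s)) s := by
  simpa [mul_comm] using ((hasDerivAt_id s).const_mul r).exp

theorem tendsto_exp_neg_mul_atTop {c : ℝ} (hc : 0 < c) :
    Tendsto (fun t => exp (-c * t)) atTop (𝓝 0) :=
  tendsto_exp_atBot.comp (tendsto_id.const_mul_atTop_of_neg (neg_neg_of_pos hc))

section Comparison

variable {ι : Type*} [Fintype ι] {c : ℝ} {v θ : ι → ℝ}

theorem le_exp_mul_add_sum_of_hasDerivAt_le {f f' : ℝ → ℝ} (hθ : ∀ i, c - θ i ≠ 0)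
    (hf : ∀ t ≥ 0, HasDerivAt f (f' t) t)
    (hf' : ∀ t ≥ 0, f' t ≤ -c * f t + ∑ i, v i * exp (-θ i * t)) {t : ℝ} (ht : 0 ≤ t) :
    f t ≤ exp (-c * t) * f 0 + ∑ i, v i / (c - θ i) * (exp (-θ i * t) - exp (-c * t)) := by
  set g : ℝ → ℝ := fun s => ∑ i, v i / (c - θ i) * exp ((c - θ i) * s) with hg
  have hg' : ∀ s, HasDerivAt g (∑ i, v i * exp ((c - θ i) * s)) s := fun s => by
    refine HasDerivAt.fun_sum fun i _ => ?_
    refine ((hasDerivAt_exp_const_mul (c - θ i) s).const_mul (v i / (c - θ i))).congr_deriv ?_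
    field_simp [hθ i]
  set F : ℝ → ℝ := fun s => exp (c * s) * f s - g s with hF
  have hF' : ∀ s ≥ 0, HasDerivAt F
      (exp (c * s) * (c * f s + f' s) - ∑ i, v i * exp ((c - θ i) * s)) s := fun s hs => by
    refine (((hasDerivAt_exp_const_mul c s).mul (hf s hs)).sub (hg' s)).congr_deriv ?_
    ring
  have hF'_nonpos :
      ∀ s ≥ 0, exp (c * s) * (c * f s + f' s) - ∑ i, v i * exp ((c - θ i) * s) ≤ 0 := by
    intro s hs
    have hexp : ∀ i, exp ((c - θ i) * s) = exp (c * s) * exp (-θ i * s) := fun i => by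
      rw [← exp_add]; ring_nf
    have hsum : ∑ i, v i * exp ((c - θ i) * s) = exp (c * s) * ∑ i, v i * exp (-θ i * s) := by
      rw [Finset.mul_sum]
      exact Finset.sum_congr rfl fun i _ => by rw [hexp]; ring
    rw [hsum, ← mul_sub]
    exact mul_nonpos_of_nonneg_of_nonpos (exp_nonneg _) (by linarith [hf' s hs])
  have hanti : AntitoneOn F (Set.Ici 0) :=
    antitoneOn_of_hasDerivWithinAt_nonpos (convex_Ici 0)
      (fun s hs => (hF' s hs).continuousAt.continuousWithinAt)
      (fun s hs => (hF' s (interior_subset hs)).hasDerivWithinAt)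
      (fun s hs => hF'_nonpos s (interior_subset hs))
  have hFt : exp (c * t) * f t ≤ f 0 + (g t - g 0) := by
    have := hanti Set.self_mem_Ici ht ht
    simp only [hF, mul_zero, exp_zero, one_mul] at this
    linarith
  have hgt : exp (-c * t) * (g t - g 0) =
      ∑ i, v i / (c - θ i) * (exp (-θ i * t) - exp (-c * t)) := by
    simp only [hg, mul_zero, exp_zero, mul_one, ← Finset.sum_sub_distrib, Finset.mul_sum]
    refine Finset.sum_congr rfl fun i _ => ?_
    rw [show -θ i * t = -c * t + (c - θ i) * t by ring, exp_add]
    ring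
  calc f t = exp (-c * t) * (exp (c * t) * f t) := by
        rw [← mul_assoc, ← exp_add]; simp
    _ ≤ exp (-c * t) * (f 0 + (g t - g 0)) := mul_le_mul_of_nonneg_left hFt (exp_nonneg _)
    _ = _ := by rw [mul_add, hgt]

theorem tendsto_exp_mul_add_sum_atTop (hc : 0 < c) (hθ : ∀ i, 0 < θ i) (y : ℝ) :
    Tendsto (fun t => exp (-c * t) * y + ∑ i, v i / (c - θ i) * (exp (-θ i * t) - exp (-c * t)))
      atTop (𝓝 0) := by
  have hexp := tendsto_exp_neg_mul_atTop hc
  have hsum := tendsto_finsetSum univ fun i _ =>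
    ((tendsto_exp_neg_mul_atTop (hθ i)).sub hexp).const_mul (v i / (c - θ i))
  simpa using (hexp.mul_const y).add hsum

end Comparison

theorem distributed_modified_event_formation_general
    (d n m : ℕ) [NeZero n] (ik jk : Fin m → Fin n)
    (dk : Fin m → ℝ)
    (p : ℝ → Fin n → EuclideanSpace ℝ (Fin d))
    (err : ℝ → EuclideanSpace ℝ (Fin m))
    (herr : ∀ t k, err t k = ‖p t (ik k) - p t (jk k)‖ ^ 2 - (dk k) ^ 2)
    (w : ℝ → Fin n → EuclideanSpace ℝ (Fin d))
    (hw : ∀ t i, w t i = ∑ k,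
      ((if i = ik k then err t k • (p t (ik k) - p t (jk k)) else 0) +
       (if i = jk k then err t k • (p t (jk k) - p t (ik k)) else 0)))
    (a γ v θ : Fin n → ℝ)
    (ha : ∀ i, 0 < a i ∧ a i < 1) (hγ : ∀ i, 0 < γ i ∧ γ i < 1)
    (hθ : ∀ i, 0 < θ i)
    (lam : ℝ) (hlam : 0 < lam)
    (ζ : ℝ)
    (hζ : ζ = Finset.univ.inf' Finset.univ_nonempty
      (fun i => (1 - γ i) * (2 - a i) / 2))
    (hθζ : ∀ i, θ i ≠ 4 * ζ * lam)
    (κ : ℝ) (hκ : κ = 2 * ζ * lam)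
    (δ : ℝ → Fin n → EuclideanSpace ℝ (Fin d))
    (hdyn : ∀ t ≥ (0 : ℝ), ∀ i, HasDerivAt (fun s => p s i) (-(w t i) - δ t i) t)
    (htrig : ∀ t ≥ (0 : ℝ), ∀ i, ‖δ t i‖ ^ 2 ≤
      γ i * a i * (2 - a i) * ‖w t i‖ ^ 2 + 2 * a i * v i * Real.exp (-θ i * t))
    (hlamb : ∀ t ≥ (0 : ℝ), lam * ‖err t‖ ^ 2 ≤ ∑ i, ‖w t i‖ ^ 2) :
    (∀ t ≥ (0 : ℝ), (1 / 4) * ‖err t‖ ^ 2 ≤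
        Real.exp (-(2 * κ) * t) * ((1 / 4) * ‖err 0‖ ^ 2) +
        ∑ i, v i / (2 * κ - θ i) *
          (Real.exp (-θ i * t) - Real.exp (-(2 * κ) * t))) ∧
    Filter.Tendsto (fun t => ‖err t‖) Filter.atTop (nhds 0) := by
  have hζ_le : ∀ i, ζ ≤ (1 - γ i) * (2 - a i) / 2 := fun i => hζ ▸ inf'_le _ (mem_univ i)
  have hζ_pos : 0 < ζ := hζ ▸ (lt_inf'_iff _).2 fun i _ => by
    have := (hγ i).2; have := (ha i).2
    exact div_pos (mul_pos (by linarith) (by linarith)) two_pos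
  have hκ_pos : 0 < κ := hκ ▸ by positivity
  have herr' : err = fun t => distanceError ik jk dk (p t) := by
    ext t k; exact herr t k
  have hw' : ∀ t i, w t i = rigidityTransposeMul ik jk (p t) (distanceError ik jk dk (p t)) i :=
    fun t i => by rw [hw, herr']; rfl
  have hderiv : ∀ t ≥ 0, HasDerivAt (fun s => 1 / 4 * ‖err s‖ ^ 2)
      (∑ i, ⟪w t i, -w t i - δ t i⟫) t := fun t ht => by
    have h := hasDerivAt_distanceError_energy ik jk dk (hdyn t ht)
    rw [herr']
    simpa only [← hw'] using h
  have hrate : ∀ t ≥ 0, ∑ i, ⟪w t i, -w t i - δ t i⟫ ≤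
      -(2 * κ) * (1 / 4 * ‖err t‖ ^ 2) + ∑ i, v i * exp (-θ i * t) := fun t ht => by
    have := sum_inner_neg_sub_le (x := fun i => v i * exp (-θ i * t)) (fun i => (ha i).1)
      hζ_pos.le hζ_le (fun i => (htrig t ht i).trans_eq (by ring)) (hlamb t ht)
    rw [hκ]; linarith
  have hbound := fun t (ht : t ≥ 0) => le_exp_mul_add_sum_of_hasDerivAt_le
    (fun i h => hθζ i (by rw [hκ] at h; linarith)) hderiv hrate ht
  refine ⟨hbound, ?_⟩
  have hsq : Tendsto (fun t => 1 / 4 * ‖err t‖ ^ 2) atTop (𝓝 0) :=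
    tendsto_of_tendsto_of_tendsto_of_le_of_le' tendsto_const_nhds
      (tendsto_exp_mul_add_sum_atTop (by positivity) hθ _)
      (Eventually.of_forall fun t => by positivity) (eventually_ge_atTop 0 |>.mono hbound)
  simpa using (hsq.const_mul 4).sqrt

/-- **Theorem 5, distributed formation control with the modified event
function.** Each agent `i` moves as `ṗ_i = −w_i − δ_i` with `w_i = (R(p)ᵀe)_i`.
If the modified distributed event trigger guarantees
`‖δ_i(t)‖² ≤ γ_i a_i(2−a_i)‖w_i(t)‖² + 2a_i v_i exp(−θ_i t)`, and
`∑_i ‖w_i(t)‖² ≥ λ‖e(t)‖²`, with `a_i, γ_i ∈ (0,1)`, `v_i, θ_i, λ > 0` and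
`θ_i ≠ 4ζλ` where `ζ = min_i (1−γ_i)(2−a_i)/2`, then with `κ = 2ζλ`:
`(1/4)‖e(t)‖² ≤ exp(−2κt)(1/4)‖e(0)‖² + ∑_i (v_i/(2κ−θ_i))(exp(−θ_i t) − exp(−2κt))`
for all `t ≥ 0`, and `‖e(t)‖ → 0` as `t → ∞`. -/
theorem distributed_modified_event_formation
    (d n m : ℕ) [NeZero n] (ik jk : Fin m → Fin n)
    (dk : Fin m → ℝ) (hdk : ∀ k, 0 < dk k)
    (p : ℝ → Fin n → EuclideanSpace ℝ (Fin d))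
    (err : ℝ → EuclideanSpace ℝ (Fin m))
    (herr : ∀ t k, err t k = ‖p t (ik k) - p t (jk k)‖ ^ 2 - (dk k) ^ 2)
    (w : ℝ → Fin n → EuclideanSpace ℝ (Fin d))
    (hw : ∀ t i, w t i = ∑ k,
      ((if i = ik k then err t k • (p t (ik k) - p t (jk k)) else 0) +
       (if i = jk k then err t k • (p t (jk k) - p t (ik k)) else 0)))
    (a γ v θ : Fin n → ℝ)
    (ha : ∀ i, 0 < a i ∧ a i < 1) (hγ : ∀ i, 0 < γ i ∧ γ i < 1)
    (hv : ∀ i, 0 < v i) (hθ : ∀ i, 0 < θ i)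
    (lam : ℝ) (hlam : 0 < lam)
    (ζ : ℝ)
    (hζ : ζ = Finset.univ.inf' Finset.univ_nonempty
      (fun i => (1 - γ i) * (2 - a i) / 2))
    (hθζ : ∀ i, θ i ≠ 4 * ζ * lam)
    (κ : ℝ) (hκ : κ = 2 * ζ * lam)
    (δ : ℝ → Fin n → EuclideanSpace ℝ (Fin d))
    (hdyn : ∀ t ≥ (0 : ℝ), ∀ i, HasDerivAt (fun s => p s i) (-(w t i) - δ t i) t)
    (htrig : ∀ t ≥ (0 : ℝ), ∀ i, ‖δ t i‖ ^ 2 ≤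
      γ i * a i * (2 - a i) * ‖w t i‖ ^ 2 + 2 * a i * v i * Real.exp (-θ i * t))
    (hlamb : ∀ t ≥ (0 : ℝ), lam * ‖err t‖ ^ 2 ≤ ∑ i, ‖w t i‖ ^ 2) :
    (∀ t ≥ (0 : ℝ), (1 / 4) * ‖err t‖ ^ 2 ≤
        Real.exp (-(2 * κ) * t) * ((1 / 4) * ‖err 0‖ ^ 2) +
        ∑ i, v i / (2 * κ - θ i) *
          (Real.exp (-θ i * t) - Real.exp (-(2 * κ) * t))) ∧
    Filter.Tendsto (fun t => ‖err t‖) Filter.atTop (nhds 0) :=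
  distributed_modified_event_formation_general d n m ik jk dk p err herr w hw a γ v θ ha hγ hθ lam
    hlam ζ hζ hθζ κ hκ δ hdyn htrig hlamb
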